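/- arXiv:2303.09460 — 2 statements merged into one kernel-verified Lean document; each statement's English description precedes it below -/
import Mathlib

section
/- The groups G₁ = A₅ × A₅ × A₅ and G₂ = C₃₀ × C₃₀ × C₃₀ × C₂ × C₂ × C₂ are of the same two orders type: |G₁| = |G₂| = 60³ and π_e(G₁) = π_e(G₂); moreover G₂ is solvable while G₁ is not solvable. -/
/-!
Both groups have exponent 30 and contain an element of order 30, so in each of them the element
orders are exactly the divisors of 30: an element of order `n` has powers of every order
dividing `n`. The second group is abelian, whereas `A₅³` surjects onto `A₅`, which is not
solvable since `S₅` is an extension of `C₂` by it.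
-/

open Monoid

theorem setOf_orderOf_eq_setOf_dvd {G : Type*} [Monoid G] {n : ℕ} (hn : n ≠ 0)
    (hexp : exponent G ∣ n) {g : G} (hg : orderOf g = n) :
    {m : ℕ | ∃ x : G, orderOf x = m} = {m : ℕ | m ∣ n} := by
  ext m
  constructor
  · rintro ⟨x, rfl⟩
    exact (order_dvd_exponent x).trans hexp
  · intro (hm : m ∣ n)
    subst hg
    exact ⟨g ^ (orderOf g / m), orderOf_pow_orderOf_div hn hm⟩

theorem exponent_prod_dvd {M N : Type*} [Monoid M] [Monoid N] {n : ℕ}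
    (hM : exponent M ∣ n) (hN : exponent N ∣ n) : exponent (M × N) ∣ n :=
  exponent_prod (M₁ := M) (M₂ := N) ▸ lcm_dvd hM hN

set_option maxRecDepth 40000 in
theorem exponent_alternatingGroup_fin_five_dvd : exponent (alternatingGroup (Fin 5)) ∣ 30 :=
  exponent_dvd_of_forall_pow_eq_one (by decide)

theorem not_isSolvable_alternatingGroup_fin_five : ¬ Group.IsSolvable (alternatingGroup (Fin 5)) :=
  fun _ ↦ Equiv.Perm.not_isSolvable_fin_5 <|
    Group.isSolvable_of_ker_le_range (alternatingGroup (Fin 5)).subtype Equiv.Perm.sign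
      (Subgroup.range_subtype _).ge

theorem not_isSolvable_prod_of_left {G H : Type*} [Group G] [Group H] (hG : ¬ Group.IsSolvable G) :
    ¬ Group.IsSolvable (G × H) :=
  fun _ ↦ hG (Group.isSolvable_of_surjective (f := MonoidHom.fst G H) Prod.fst_surjective)

theorem nat_card_alternatingGroup_fin_five : Nat.card (alternatingGroup (Fin 5)) = 60 := by
  rw [nat_card_alternatingGroup, Nat.card_fin]; rfl

open Equiv Equiv.Perm in
set_option maxRecDepth 10000 in
theorem exists_orderOf_alternatingGroup_fin_five_cube_eq_thirty :
    ∃ x : alternatingGroup (Fin 5) × alternatingGroup (Fin 5) × alternatingGroup (Fin 5),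
      orderOf x = 30 := by
  have : Fact (Nat.Prime 5) := ⟨by norm_num⟩
  have h2 : orderOf (c[0, 1] * c[2, 3] : Perm (Fin 5)) = 2 :=
    orderOf_eq_prime (by decide) (by decide)
  have h3 : orderOf (c[0, 1, 2] : Perm (Fin 5)) = 3 := orderOf_eq_prime (by decide) (by decide)
  have h5 : orderOf (c[0, 1, 2, 3, 4] : Perm (Fin 5)) = 5 :=
    orderOf_eq_prime (by decide) (by decide)
  have e2 : sign (c[0, 1] * c[2, 3] : Perm (Fin 5)) = 1 := by decide
  have e3 : sign (c[0, 1, 2] : Perm (Fin 5)) = 1 := by decide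
  have e5 : sign (c[0, 1, 2, 3, 4] : Perm (Fin 5)) = 1 := by decide
  refine ⟨(⟨_, mem_alternatingGroup.2 e2⟩, ⟨_, mem_alternatingGroup.2 e3⟩,
    ⟨_, mem_alternatingGroup.2 e5⟩), ?_⟩
  simp only [Prod.orderOf_mk, Subgroup.orderOf_mk, h2, h3, h5]
  rfl

theorem setOf_orderOf_alternatingGroup_fin_five_cube :
    {n : ℕ | ∃ x : alternatingGroup (Fin 5) × alternatingGroup (Fin 5) ×
      alternatingGroup (Fin 5), orderOf x = n} = {n : ℕ | n ∣ 30} := by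
  have hA := exponent_alternatingGroup_fin_five_dvd
  obtain ⟨x, hx⟩ := exists_orderOf_alternatingGroup_fin_five_cube_eq_thirty
  exact setOf_orderOf_eq_setOf_dvd (by norm_num) (exponent_prod_dvd hA (exponent_prod_dvd hA hA)) hx

theorem setOf_orderOf_zmod_thirty_cube_prod_zmod_two_cube :
    {n : ℕ | ∃ x : Multiplicative (ZMod 30) × Multiplicative (ZMod 30) ×
      Multiplicative (ZMod 30) × Multiplicative (ZMod 2) × Multiplicative (ZMod 2) ×
      Multiplicative (ZMod 2), orderOf x = n} = {n : ℕ | n ∣ 30} := by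
  have h30 : exponent (Multiplicative (ZMod 30)) ∣ 30 :=
    (exponent_multiplicative.trans (ZMod.exponent 30)).dvd
  have h2 : exponent (Multiplicative (ZMod 2)) ∣ 30 :=
    (exponent_multiplicative.trans (ZMod.exponent 2)).dvd.trans (by norm_num)
  refine setOf_orderOf_eq_setOf_dvd (g := (Multiplicative.ofAdd 1, 1, 1, 1, 1, 1)) (by norm_num)
    (exponent_prod_dvd h30 <| exponent_prod_dvd h30 <| exponent_prod_dvd h30 <|
      exponent_prod_dvd h2 <| exponent_prod_dvd h2 h2) ?_
  simp [Prod.orderOf_mk]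

theorem stmt_10 :
    Nat.card (alternatingGroup (Fin 5) × alternatingGroup (Fin 5) × alternatingGroup (Fin 5))
        = 60 ^ 3 ∧
    Nat.card (Multiplicative (ZMod 30) × Multiplicative (ZMod 30) × Multiplicative (ZMod 30) ×
        Multiplicative (ZMod 2) × Multiplicative (ZMod 2) × Multiplicative (ZMod 2)) = 60 ^ 3 ∧
    {n : ℕ | ∃ x : alternatingGroup (Fin 5) × alternatingGroup (Fin 5) × alternatingGroup (Fin 5),
        orderOf x = n} =
      {n : ℕ | ∃ x : Multiplicative (ZMod 30) × Multiplicative (ZMod 30) ×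
        Multiplicative (ZMod 30) × Multiplicative (ZMod 2) × Multiplicative (ZMod 2) ×
        Multiplicative (ZMod 2), orderOf x = n} ∧
    IsSolvable (Multiplicative (ZMod 30) × Multiplicative (ZMod 30) × Multiplicative (ZMod 30) ×
        Multiplicative (ZMod 2) × Multiplicative (ZMod 2) × Multiplicative (ZMod 2)) ∧
    ¬ IsSolvable (alternatingGroup (Fin 5) × alternatingGroup (Fin 5) ×
        alternatingGroup (Fin 5)) := by
  refine ⟨?_, ?_, ?_, inferInstanceAs (Group.IsSolvable _),
    not_isSolvable_prod_of_left not_isSolvable_alternatingGroup_fin_five⟩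
  · simp only [Nat.card_prod, nat_card_alternatingGroup_fin_five]; rfl
  · simp
  · rw [setOf_orderOf_alternatingGroup_fin_five_cube,
      setOf_orderOf_zmod_thirty_cube_prod_zmod_two_cube]
end

section
/- If two finite groups G and H admit a bijection between their conjugacy classes of cyclic subgroups which preserves the order of the subgroups and the cardinality of the conjugacy classes, then G and H are of the same order type. -/
/-!
Every element `x` of a finite group lies in exactly one conjugacy class of cyclic subgroups,
namely that of `⟨x⟩`, and `x ^ d = 1` iff the order of that class divides `d`. A class of
cyclic subgroups of order `n` with `k` members carries exactly `k * φ n` elements (the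
generators of its members), so the number of solutions of `x ^ d = 1` is a sum over the
classes of order dividing `d` that only involves the orders and sizes of these classes.
-/

open MulAction Pointwise

namespace Subgroup

variable {G : Type*} [Group G]

theorem card_eq_of_mem_orbit_conjAct {A B : Subgroup G} (h : A ∈ orbit (ConjAct G) B) :
    Nat.card A = Nat.card B := by
  obtain ⟨g, rfl⟩ := h
  exact (Nat.card_congr (equivSMul g B).toEquiv).symm

theorem isCyclic_of_mem_orbit_conjAct {A B : Subgroup G} (h : A ∈ orbit (ConjAct G) B)
    [IsCyclic B] : IsCyclic A := by
  obtain ⟨g, rfl⟩ := h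
  exact isCyclic_of_surjective _ (equivSMul g B).surjective

theorem zpowers_eq_iff {K : Subgroup G} [Finite K] {x : G} :
    zpowers x = K ↔ x ∈ K ∧ orderOf x = Nat.card K := by
  refine ⟨fun h => ⟨h ▸ mem_zpowers x, by rw [← h, Nat.card_zpowers]⟩, fun ⟨hx, h⟩ => ?_⟩
  exact eq_of_le_of_card_ge (zpowers_le.mpr hx) (by rw [Nat.card_zpowers, h])

theorem card_generators_eq_totient (K : Subgroup G) [Finite K] [IsCyclic K] :
    Nat.card {x : G // zpowers x = K} = (Nat.card K).totient := by
  classical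
  have := Fintype.ofFinite K
  have e : {x : G // zpowers x = K} ≃ {y : K // orderOf y = Nat.card K} :=
    (Equiv.subtypeEquivRight fun _ => zpowers_eq_iff).trans
      ((Equiv.subtypeSubtypeEquivSubtypeInter (· ∈ K) (orderOf · = Nat.card K)).symm.trans
        (Equiv.subtypeEquivRight fun y => by rw [orderOf_coe]))
  rw [Nat.card_congr e, Nat.card_eq_fintype_card, Fintype.card_subtype, Nat.card_eq_fintype_card]
  exact IsCyclic.card_orderOf_eq_totient dvd_rfl

variable [Finite G]

theorem card_zpowers_mem_orbit_conjAct (B : Subgroup G) [IsCyclic B] :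
    Nat.card {x : G // zpowers x ∈ orbit (ConjAct G) B} =
      Nat.card (orbit (ConjAct G) B) * (Nat.card B).totient := by
  have := Fintype.ofFinite (orbit (ConjAct G) B)
  rw [← Nat.card_congr (Equiv.sigmaSubtypeFiberEquivSubtype zpowers fun _ => Iff.rfl),
    Nat.card_sigma]
  have card_fiber (K : orbit (ConjAct G) B) :
      Nat.card {x : G // zpowers x = K.1} = (Nat.card B).totient := by
    have := isCyclic_of_mem_orbit_conjAct K.2
    rw [card_generators_eq_totient, card_eq_of_mem_orbit_conjAct K.2]
  simp only [card_fiber, Finset.sum_const, Finset.card_univ, smul_eq_mul,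
    Nat.card_eq_fintype_card]

end Subgroup

abbrev CyclicClass (G : Type*) [Group G] :=
  {q : Quotient (orbitRel (ConjAct G) (Subgroup G)) // IsCyclic q.out}

namespace CyclicClass

variable {G : Type*} [Group G]

noncomputable def of (x : G) : CyclicClass G :=
  ⟨⟦Subgroup.zpowers x⟧, Subgroup.isCyclic_of_mem_orbit_conjAct
    ((orbitRel_apply (G := ConjAct G)).mp (Quotient.mk_out (Subgroup.zpowers x)))⟩

theorem of_eq_iff {x : G} {q : CyclicClass G} :
    of x = q ↔ Subgroup.zpowers x ∈ orbit (ConjAct G) q.1.out :=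
  Subtype.ext_iff.trans Quotient.mk_eq_iff_out

theorem pow_eq_one_iff_card_dvd (x : G) (d : ℕ) : x ^ d = 1 ↔ Nat.card (of x).1.out ∣ d := by
  rw [← orderOf_dvd_iff_pow_eq_one, ← Nat.card_zpowers,
    Subgroup.card_eq_of_mem_orbit_conjAct (of_eq_iff.mp rfl)]

variable [Finite G]

theorem card_of_eq (q : CyclicClass G) :
    Nat.card {x : G // of x = q} =
      Nat.card (orbit (ConjAct G) q.1.out) * (Nat.card q.1.out).totient := by
  have := q.2
  simp_rw [of_eq_iff]
  exact Subgroup.card_zpowers_mem_orbit_conjAct _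

theorem card_pow_eq_one (d : ℕ) :
    Nat.card {x : G // x ^ d = 1} =
      ∑ᶠ q : {q : CyclicClass G // Nat.card q.1.out ∣ d},
        Nat.card (orbit (ConjAct G) q.1.1.out) * (Nat.card q.1.1.out).totient := by
  have := Fintype.ofFinite {q : CyclicClass G // Nat.card q.1.out ∣ d}
  rw [← Nat.card_congr (Equiv.sigmaSubtypeFiberEquivSubtype of
    (q := fun q : CyclicClass G => Nat.card q.1.out ∣ d) fun x => pow_eq_one_iff_card_dvd x d),
    Nat.card_sigma, finsum_eq_sum_of_fintype]
  simp_rw [card_of_eq]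

end CyclicClass

open MulAction Pointwise in
theorem stmt_15 (G H : Type*) [Group G] [Fintype G] [Group H] [Fintype H]
    (e : {q : Quotient (orbitRel (ConjAct G) (Subgroup G)) // IsCyclic q.out} ≃
         {q : Quotient (orbitRel (ConjAct H) (Subgroup H)) // IsCyclic q.out})
    (hord : ∀ q, Nat.card ((e q).1.out) = Nat.card (q.1.out))
    (hclass : ∀ q, Nat.card (orbit (ConjAct H) (e q).1.out) =
      Nat.card (orbit (ConjAct G) q.1.out)) :
    ∀ d : ℕ, 0 < d →
      Nat.card {x : G // x ^ d = 1} = Nat.card {y : H // y ^ d = 1} := by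
  intro d _
  rw [CyclicClass.card_pow_eq_one, CyclicClass.card_pow_eq_one,
    ← finsum_comp_equiv (e.subtypeEquiv fun q => by rw [hord])]
  simp only [Equiv.subtypeEquiv_apply, hord, hclass]
end
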